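/- arXiv:1306.3194 — 4 statements merged into one kernel-verified Lean document; each statement's English description precedes it below -/
import Mathlib

section
/- Every C*-embedded subspace of an F-space is an F-space. -/
open Set Cardinal Topology

/-- `U` is a cozero set: the set where some continuous real-valued function is nonzero. -/
def IsCozero {X : Type*} [TopologicalSpace X] (U : Set X) : Prop :=
  ∃ f : C(X, ℝ), U = {x | f x ≠ 0}

/-- `A` is C*-embedded in `X`: every continuous function `A → [0,1]` extends continuously. -/
def IsCStarEmbedded {X : Type*} [TopologicalSpace X] (A : Set X) : Prop :=
  ∀ f : C(A, Set.Icc (0:ℝ) 1), ∃ g : C(X, Set.Icc (0:ℝ) 1), ∀ a : A, g a = f a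

/-- `X` is an F-space: every cozero set is C*-embedded. -/
def IsFSpace (X : Type*) [TopologicalSpace X] : Prop :=
  ∀ U : Set X, IsCozero U → IsCStarEmbedded U

/-- `A` is a P-set: closed, and countable intersections of neighborhoods of `A`
are neighborhoods of `A`. -/
def IsPSet {X : Type*} [TopologicalSpace X] (A : Set X) : Prop :=
  IsClosed A ∧ ∀ N : ℕ → Set X, (∀ n, N n ∈ 𝓝ˢ A) → (⋂ n, N n) ∈ 𝓝ˢ A

/-- `x` is a P-point: countable intersections of neighborhoods of `x` are neighborhoods. -/
def IsPPoint {X : Type*} [TopologicalSpace X] (x : X) : Prop :=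
  ∀ N : ℕ → Set X, (∀ n, N n ∈ 𝓝 x) → (⋂ n, N n) ∈ 𝓝 x

/-- `A` is nicely placed: every open neighborhood of `A` contains a cozero set containing `A`. -/
def IsNicelyPlaced {X : Type*} [TopologicalSpace X] (A : Set X) : Prop :=
  ∀ U : Set X, IsOpen U → A ⊆ U → ∃ V : Set X, IsCozero V ∧ A ⊆ V ∧ V ⊆ U

/-- `F` is an Fσ set: a countable union of closed sets. -/
def IsFSigma {X : Type*} [TopologicalSpace X] (F : Set X) : Prop :=
  ∃ A : ℕ → Set X, (∀ n, IsClosed (A n)) ∧ F = ⋃ n, A n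

/-!
Write the cozero set as `U = coz f` with `f : A → [0,1]`. For `h : U → [0,1]` the product `h f`,
extended by `0`, is continuous on `A`. Extend `f` and `h f` to `G` and `K` on `X`: then `coz G` is a
cozero set of `X` containing `U`, so the quotient `K / G` (clamped to `[0,1]`) extends from it to
`X`, and on `U` this extension equals `h f / f = h`.
-/

section

variable {X : Type*} [TopologicalSpace X]

theorem IsCozero.exists_eq_cozero_unitInterval {U : Set X} (hU : IsCozero U) :
    ∃ f : C(X, Icc (0 : ℝ) 1), U = {x | (f x : ℝ) ≠ 0} := by
  obtain ⟨f, rfl⟩ := hU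
  refine ⟨⟨fun x => ⟨min |f x| 1, le_min (abs_nonneg _) zero_le_one, min_le_right _ _⟩,
    by fun_prop⟩, ?_⟩
  ext x
  refine ⟨fun hx => (lt_min (abs_pos.2 hx) one_pos).ne', fun hx h0 => hx ?_⟩
  simp [show f x = 0 from h0]

theorem continuous_dite_mul_of_abs_le {f : X → ℝ} (hf : Continuous f)
    {h : {x | f x ≠ 0} → ℝ} (hh : Continuous h) {C : ℝ} (hC : ∀ u, |h u| ≤ C) :
    Continuous fun x => if hx : f x ≠ 0 then h ⟨x, hx⟩ * f x else 0 := by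
  refine continuous_iff_continuousAt.2 fun x => ?_
  by_cases hx : f x ≠ 0
  · have hU : IsOpen {x | f x ≠ 0} := isOpen_ne_fun hf continuous_const
    refine ContinuousOn.continuousAt ?_ (hU.mem_nhds hx)
    rw [continuousOn_iff_continuous_domRestrict]
    convert hh.mul (hf.comp continuous_subtype_val) using 1
    funext u
    exact dif_pos u.2
  · have hfx : f x = 0 := not_not.1 hx
    rw [ContinuousAt, dif_neg hx]
    have hbound : ∀ y, ‖(if hy : f y ≠ 0 then h ⟨y, hy⟩ * f y else 0)‖ ≤ C * |f y| := by
      intro y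
      split_ifs with hy
      · rw [Real.norm_eq_abs, abs_mul]
        exact mul_le_mul_of_nonneg_right (hC _) (abs_nonneg _)
      · simp [not_not.1 hy]
    refine squeeze_zero_norm hbound ?_
    simpa [hfx] using ((continuous_abs.comp hf).tendsto x).const_mul C

theorem exists_unitInterval_mul_extension (f : C(X, Icc (0 : ℝ) 1))
    (h : C({x | (f x : ℝ) ≠ 0}, Icc (0 : ℝ) 1)) :
    ∃ k : C(X, Icc (0 : ℝ) 1), ∀ u : {x | (f x : ℝ) ≠ 0}, (k u : ℝ) = h u * f u := by
  set k₀ : X → ℝ := fun x => if hx : (f x : ℝ) ≠ 0 then (h ⟨x, hx⟩ : ℝ) * f x else 0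
  have hk₀ : Continuous k₀ := continuous_dite_mul_of_abs_le (by fun_prop) (by fun_prop)
    (C := 1) fun u => abs_le.2 ⟨by linarith [(h u).2.1], (h u).2.2⟩
  have hmem : ∀ x, k₀ x ∈ Icc (0 : ℝ) 1 := by
    intro x
    simp only [k₀]
    split_ifs
    · exact ⟨mul_nonneg (h _).2.1 (f x).2.1, mul_le_one₀ (h _).2.2 (f x).2.1 (f x).2.2⟩
    · exact ⟨le_rfl, zero_le_one⟩
  exact ⟨⟨fun x => ⟨k₀ x, hmem x⟩, hk₀.subtype_mk hmem⟩, fun u => dif_pos u.2⟩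

noncomputable def clampedQuotient (K G : C(X, Icc (0 : ℝ) 1)) :
    C({x | (G x : ℝ) ≠ 0}, Icc (0 : ℝ) 1) :=
  ⟨fun v => projIcc 0 1 zero_le_one ((K v : ℝ) / G v),
    continuous_projIcc.comp ((by fun_prop : Continuous fun v : {x | (G x : ℝ) ≠ 0} => (K v : ℝ)).div
      (by fun_prop) fun v => v.2)⟩

theorem clampedQuotient_apply_of_eq_mul {K G : C(X, Icc (0 : ℝ) 1)} {v : {x | (G x : ℝ) ≠ 0}}
    {t : Icc (0 : ℝ) 1} (h : (K v : ℝ) = t * G v) : clampedQuotient K G v = t := by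
  simp only [clampedQuotient, ContinuousMap.coe_mk, h, mul_div_assoc, div_self v.2, mul_one,
    projIcc_val]

end

theorem cstar_embedded_subspace_of_FSpace_is_FSpace_general
    {X : Type*} [TopologicalSpace X] (A : Set X)
    (hA : IsCStarEmbedded A) (hX : IsFSpace X) : IsFSpace A := by
  rintro U hU h
  obtain ⟨f, rfl⟩ := hU.exists_eq_cozero_unitInterval
  obtain ⟨k, hk⟩ := exists_unitInterval_mul_extension f h
  obtain ⟨G, hG⟩ := hA f
  obtain ⟨K, hK⟩ := hA k
  obtain ⟨H, hH⟩ := hX _ ⟨⟨fun x => G x, by fun_prop⟩, rfl⟩ (clampedQuotient K G)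
  refine ⟨H.restrict A, fun u => ?_⟩
  have hu : ((u : A) : X) ∈ {x | (G x : ℝ) ≠ 0} := by simpa [hG] using u.2
  exact (hH ⟨_, hu⟩).trans (clampedQuotient_apply_of_eq_mul (by rw [hK, hG]; exact hk u))

theorem cstar_embedded_subspace_of_FSpace_is_FSpace
    {X : Type*} [TopologicalSpace X] [T35Space X] (A : Set X)
    (hA : IsCStarEmbedded A) (hX : IsFSpace X) : IsFSpace A :=
  cstar_embedded_subspace_of_FSpace_is_FSpace_general A hA hX
end

section
/- Let x be a P-point in D, E a locally compact Hausdorff space, and F an Fσ subset of D × E disjoint from {x} × E. Then the closure of F in D × E is disjoint from {x} × E. -/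
open Set Cardinal Topology

theorem closure_of_FSigma_disjoint_from_ppoint_fiber
    {D E : Type*} [TopologicalSpace D] [TopologicalSpace E]
    [LocallyCompactSpace E] [T2Space E] (x : D) (hx : IsPPoint x)
    {F : Set (D × E)} (hF : IsFSigma F)
    (hdisj : Disjoint F ({x} ×ˢ (Set.univ : Set E))) :
    Disjoint (closure F) ({x} ×ˢ (Set.univ : Set E)) := by
  obtain ⟨A, hAc, rfl⟩ := hF
  rw [Set.disjoint_right]
  rintro ⟨a, e⟩ ⟨ha, -⟩
  rcases Set.mem_singleton_iff.mp ha with rfl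
  obtain ⟨K, hKc, hKnhds⟩ := exists_compact_mem_nhds e
  have key : ∀ n : ℕ, ∃ V : Set D, IsOpen V ∧ a ∈ V ∧ V ×ˢ K ⊆ (A n)ᶜ := by
    intro n
    have hsub : ({a} : Set D) ×ˢ K ⊆ (A n)ᶜ := by
      rintro ⟨d, k⟩ ⟨hd, -⟩ hmem
      rcases Set.mem_singleton_iff.mp hd with rfl
      exact (Set.disjoint_left.mp hdisj (Set.mem_iUnion.mpr ⟨n, hmem⟩))
        ⟨rfl, Set.mem_univ _⟩
    obtain ⟨u, v, hu, hv, hau, hKv, huv⟩ := generalized_tube_lemma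
      isCompact_singleton hKc (hAc n).isOpen_compl hsub
    exact ⟨u, hu, hau rfl, fun p hp => huv ⟨hp.1, hKv hp.2⟩⟩
  choose V hVo hVa hVK using key
  have hV : (⋂ n, V n) ∈ 𝓝 a := hx V (fun n => (hVo n).mem_nhds (hVa n))
  have hnb : (⋂ n, V n) ×ˢ K ∈ 𝓝 ((a, e) : D × E) := prod_mem_nhds hV hKnhds
  intro hcl
  obtain ⟨⟨d, k⟩, hp1, hp2⟩ := (mem_closure_iff_nhds.mp hcl) _ hnb
  obtain ⟨m, hm⟩ := Set.mem_iUnion.mp hp2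
  exact hVK m ⟨Set.mem_iInter.mp hp1.1 m, hp1.2⟩ hm
end

section
/- Let 𝓐 be a maximal almost disjoint family of uncountable subsets of ω₁ and X = ω₁ ∪ 𝓐 the Mrówka-type space as above. Then every open neighborhood of the closed set 𝓐 in X has countable complement, and hence is clopen; in particular 𝓐 is nicely placed in X. -/
open Set Cardinal Topology

/-- The Mrówka-type topology on `W ⊕ 𝓐`: points of `W` are isolated and a basic
neighborhood of `A ∈ 𝓐` is `{A} ∪ (A \ S)` with `S` countable.  A set `U` is open
iff for each `A ∈ 𝓐` with `inr A ∈ U`, all but countably many points of `A`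
(viewed via `inl`) lie in `U`. -/
def mrowkaTop {W : Type*} (𝓐 : Set (Set W)) : TopologicalSpace (W ⊕ ↥𝓐) where
  IsOpen U := ∀ A : ↥𝓐, Sum.inr A ∈ U → {w ∈ (A : Set W) | Sum.inl w ∉ U}.Countable
  isOpen_univ := by intro A _; simp
  isOpen_inter := by
    intro U V hU hV A hA
    refine Set.Countable.mono ?_ ((hU A hA.1).union (hV A hA.2))
    intro w hw
    rcases hw with ⟨hwA, hw⟩
    by_cases h : Sum.inl w ∈ U
    · exact Or.inr ⟨hwA, fun hV' => hw ⟨h, hV'⟩⟩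
    · exact Or.inl ⟨hwA, h⟩
  isOpen_sUnion := by
    intro S hS A hA
    rcases hA with ⟨U, hUS, hAU⟩
    refine Set.Countable.mono ?_ (hS U hUS A hAU)
    intro w hw
    exact ⟨hw.1, fun h => hw.2 ⟨U, hUS, h⟩⟩

theorem mrowka_neighborhoods_of_A_are_clopen_and_nicely_placed
    {W : Type*} (hW : #W = Cardinal.aleph 1) (𝓐 : Set (Set W))
    (hunc : ∀ A ∈ 𝓐, ¬ A.Countable)
    (had : ∀ A ∈ 𝓐, ∀ B ∈ 𝓐, A ≠ B → (A ∩ B).Countable)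
    (hmax : ∀ B : Set W, ¬ B.Countable → ∃ A ∈ 𝓐, ¬ (A ∩ B).Countable) :
    (∀ U : Set (W ⊕ ↥𝓐), @IsOpen _ (mrowkaTop 𝓐) U →
      Set.range Sum.inr ⊆ U → Uᶜ.Countable ∧ @IsClopen _ (mrowkaTop 𝓐) U) ∧
    @IsNicelyPlaced _ (mrowkaTop 𝓐) (Set.range Sum.inr) := by
  letI : TopologicalSpace (W ⊕ ↥𝓐) := mrowkaTop 𝓐
  have key : ∀ U : Set (W ⊕ ↥𝓐), IsOpen U → Set.range Sum.inr ⊆ U →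
      Uᶜ.Countable ∧ IsClopen U := by
    intro U hU hsub
    have hB : {w : W | Sum.inl w ∉ U}.Countable := by
      by_contra hB
      obtain ⟨A, hA𝓐, hAB⟩ := hmax _ hB
      refine hAB (Set.Countable.mono ?_ (hU ⟨A, hA𝓐⟩ (hsub ⟨⟨A, hA𝓐⟩, rfl⟩)))
      intro w hw; exact ⟨hw.1, hw.2⟩
    have hcompl : Uᶜ ⊆ Sum.inl '' {w : W | Sum.inl w ∉ U} := by
      rintro (w | A) hx
      · exact ⟨w, hx, rfl⟩
      · exact absurd (hsub ⟨A, rfl⟩) hx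
    have hcount : Uᶜ.Countable := (hB.image _).mono hcompl
    refine ⟨hcount, ?_, hU⟩
    rw [← isOpen_compl_iff]
    intro A hA
    exact absurd (hsub ⟨A, rfl⟩) hA
  refine ⟨key, ?_⟩
  intro U hU hsub
  refine ⟨U, ?_, hsub, subset_rfl⟩
  have hclopen := (key U hU hsub).2
  refine ⟨⟨U.indicator 1, continuous_indicator (by simp [hclopen]) continuous_const.continuousOn⟩, ?_⟩
  ext x
  by_cases hx : x ∈ U <;> simp [Set.indicator_apply, hx]
end

section
/- A union of at most ω₁ many cozero subsets of an F-space is an F-space. -/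
open Set Cardinal Topology Filter

section AuxLemmas

lemma IsCozero.isOpen {X : Type*} [TopologicalSpace X] {U : Set X} (h : IsCozero U) :
    IsOpen U := by
  obtain ⟨f, rfl⟩ := h
  exact isOpen_ne.preimage f.continuous

lemma isCozero_empty {X : Type*} [TopologicalSpace X] : IsCozero (∅ : Set X) :=
  ⟨0, by simp⟩

lemma IsCozero.union {X : Type*} [TopologicalSpace X] {U V : Set X}
    (hU : IsCozero U) (hV : IsCozero V) : IsCozero (U ∪ V) := by
  obtain ⟨f, rfl⟩ := hU; obtain ⟨g, rfl⟩ := hV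
  refine ⟨⟨fun x => |f x| + |g x|, by fun_prop⟩, ?_⟩
  ext x
  have h0 : |f x| + |g x| = 0 ↔ f x = 0 ∧ g x = 0 := by
    rw [add_eq_zero_iff_of_nonneg (abs_nonneg _) (abs_nonneg _), abs_eq_zero, abs_eq_zero]
  simp only [mem_union, mem_setOf_eq, ContinuousMap.coe_mk, ne_eq, h0]
  tauto

lemma isCozero_iUnion_nat {X : Type*} [TopologicalSpace X] (C : ℕ → Set X)
    (h : ∀ n, IsCozero (C n)) : IsCozero (⋃ n, C n) := by
  choose f hf using h
  set t : ℕ → X → ℝ := fun n x => (1/2 : ℝ)^n * min |f n x| 1 with ht_def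
  have ht0 : ∀ n x, 0 ≤ t n x := fun n x =>
    mul_nonneg (by positivity) (le_min (abs_nonneg _) zero_le_one)
  have htb : ∀ n x, ‖t n x‖ ≤ (1/2 : ℝ)^n := by
    intro n x
    rw [Real.norm_eq_abs, abs_of_nonneg (ht0 n x)]
    have h1 : min |f n x| 1 ≤ 1 := min_le_right _ _
    calc (1/2 : ℝ)^n * min |f n x| 1 ≤ (1/2 : ℝ)^n * 1 := by
          apply mul_le_mul_of_nonneg_left h1 (by positivity)
      _ = (1/2 : ℝ)^n := mul_one _
  have hsum : Summable fun n => (1/2 : ℝ)^n := summable_geometric_two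
  have hcont : Continuous fun x => ∑' n, t n x := by
    refine continuous_tsum (fun n => ?_) hsum htb
    have : Continuous (f n) := (f n).continuous
    fun_prop
  have hsx : ∀ x, Summable fun n => t n x := fun x =>
    Summable.of_nonneg_of_le (ht0 · x) (fun n => (Real.norm_eq_abs _ ▸ abs_of_nonneg (ht0 n x)) ▸ htb n x) hsum
  refine ⟨⟨fun x => ∑' n, t n x, hcont⟩, ?_⟩
  ext x
  simp only [mem_iUnion, ContinuousMap.coe_mk, mem_setOf_eq]
  constructor
  · rintro ⟨n, hn⟩
    rw [hf n] at hn
    have hpos : 0 < t n x := by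
      have : f n x ≠ 0 := hn
      have h1 : 0 < min |f n x| 1 := lt_min (abs_pos.2 this) zero_lt_one
      positivity
    have := Summable.le_tsum (hsx x) n (fun j _ => ht0 j x)
    intro h0
    rw [h0] at this
    exact absurd (lt_of_lt_of_le hpos this) (lt_irrefl 0)
  · intro hne
    by_contra hall
    push_neg at hall
    apply hne
    have : ∀ n, t n x = 0 := by
      intro n
      have hx : f n x = 0 := by
        have := hall n
        rw [hf n] at this
        simpa using this
      simp [ht_def, hx]
    simp [this]

lemma IsCozero.biUnion_countable {X : Type*} [TopologicalSpace X] {ι : Type*} {s : Set ι}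
    (hs : s.Countable) {C : ι → Set X} (h : ∀ i ∈ s, IsCozero (C i)) :
    IsCozero (⋃ i ∈ s, C i) := by
  rcases s.eq_empty_or_nonempty with rfl | hne
  · simpa using isCozero_empty
  · obtain ⟨e, rfl⟩ := hs.exists_eq_range hne
    have : ⋃ i ∈ range e, C i = ⋃ n, C (e n) := by
      rw [biUnion_range]
    rw [this]
    exact isCozero_iUnion_nat _ fun n => h _ (mem_range_self n)

lemma isCozero_image_val {X : Type*} [TopologicalSpace X] {V : Set X} (hV : IsCozero V)
    (ψ : C(V, ℝ)) : IsCozero (((↑) : V → X) '' {x : V | ψ x ≠ 0}) := by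
  classical
  obtain ⟨φ, hφ⟩ := hV
  have hVmem : ∀ x : X, x ∈ V ↔ φ x ≠ 0 := fun x => by rw [hφ]; rfl
  set k : X → ℝ := fun x => if h : x ∈ V then min |ψ ⟨x, h⟩| 1 * |φ x| else 0 with hk_def
  have hVo : IsOpen V := by rw [hφ]; exact isOpen_ne.preimage φ.continuous
  have hres : Continuous (V.restrict k) := by
    have : V.restrict k = fun v : V => min |ψ v| 1 * |φ (v : X)| := by
      funext v
      exact dif_pos v.2
    rw [this]
    have hψ : Continuous ψ := ψ.continuous
    have hφc : Continuous fun v : V => φ (v : X) := φ.continuous.comp continuous_subtype_val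
    fun_prop
  have hbound : ∀ x, |k x| ≤ |φ x| := by
    intro x
    by_cases h : x ∈ V
    · simp only [hk_def, dif_pos h]
      rw [abs_mul, abs_abs]
      have h1 : |min |ψ ⟨x, h⟩| 1| ≤ 1 := by
        rw [abs_of_nonneg (le_min (abs_nonneg _) zero_le_one)]
        exact min_le_right _ _
      calc |min |ψ ⟨x, h⟩| 1| * |φ x| ≤ 1 * |φ x| :=
            mul_le_mul_of_nonneg_right h1 (abs_nonneg _)
        _ = |φ x| := one_mul _
    · simp only [hk_def, dif_neg h, abs_zero]
      exact abs_nonneg _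
  have hk : Continuous k := by
    rw [continuous_iff_continuousAt]
    intro x
    by_cases h : x ∈ V
    · exact (continuousOn_iff_continuous_restrict.2 hres).continuousAt (hVo.mem_nhds h)
    · have hφx : φ x = 0 := by
        by_contra hc; exact h ((hVmem x).2 hc)
      have hkx : k x = 0 := by simp [hk_def, dif_neg h]
      rw [ContinuousAt, hkx]
      have habs : Tendsto (fun y => |k y|) (𝓝 x) (𝓝 0) := by
        refine squeeze_zero (fun y => abs_nonneg _) hbound ?_
        have : Tendsto (fun y => |φ y|) (𝓝 x) (𝓝 |φ x|) :=
          (continuous_abs.comp φ.continuous).continuousAt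
        rwa [hφx, abs_zero] at this
      exact (tendsto_zero_iff_abs_tendsto_zero k).2 habs
  refine ⟨⟨k, hk⟩, ?_⟩
  ext x
  simp only [ContinuousMap.coe_mk, mem_setOf_eq, mem_image]
  constructor
  · rintro ⟨v, hv, rfl⟩
    simp only [hk_def, dif_pos v.2]
    have h1 : 0 < min |ψ v| 1 := lt_min (abs_pos.2 hv) zero_lt_one
    have h2 : 0 < |φ (v : X)| := abs_pos.2 ((hVmem _).1 v.2)
    positivity
  · intro hx
    have hxV : x ∈ V := by
      by_contra h
      simp [hk_def, dif_neg h] at hx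
    refine ⟨⟨x, hxV⟩, ?_, rfl⟩
    simp only [hk_def, dif_pos hxV] at hx
    intro h0
    simp [h0] at hx


lemma key_extension {X : Type*} [TopologicalSpace X] (hX : IsFSpace X)
    {ι : Type*} [LinearOrder ι] [WellFoundedLT ι] (hcnt : ∀ i : ι, (Set.Iio i).Countable)
    (C : ι → Set X) (hC : ∀ i, IsCozero (C i))
    (W : Set X) (hWo : IsOpen W) (hWU : W ⊆ ⋃ i, C i)
    (hWcoz : ∀ V : Set X, IsCozero V → V ⊆ ⋃ i, C i → IsCozero (W ∩ V))
    (F : X → ℝ) (hF : ContinuousOn F W) (hFI : MapsTo F W (Icc (0:ℝ) 1)) :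
    ∃ G : X → ℝ, ContinuousOn G (⋃ i, C i) ∧ MapsTo G (⋃ i, C i) (Icc (0:ℝ) 1) ∧
      EqOn G F W := by
  classical
  set Us : Set ι → Set X := fun s => ⋃ i ∈ s, C i with hUs_def
  have hUsOpen : ∀ s, IsOpen (Us s) :=
    fun s => isOpen_biUnion fun i _ => (hC i).isOpen
  -- the poset of partial extensions
  set T := {p : Set ι × (X → ℝ) // IsLowerSet p.1 ∧ ContinuousOn p.2 (W ∪ Us p.1) ∧
      MapsTo p.2 (W ∪ Us p.1) (Icc (0:ℝ) 1) ∧ EqOn p.2 F W} with hT_def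
  set r : T → T → Prop := fun p q => p.1.1 ⊆ q.1.1 ∧ EqOn q.1.2 p.1.2 (W ∪ Us p.1.1)
    with hr_def
  have base : T := ⟨(∅, F), by
    refine ⟨fun a b _ h => absurd h (notMem_empty _), ?_, ?_, fun x _ => rfl⟩
    · simpa [hUs_def] using hF
    · simpa [hUs_def] using hFI⟩
  have hrtrans : ∀ {a b c : T}, r a b → r b c → r a c := by
    rintro a b c ⟨hab, hab2⟩ ⟨hbc, hbc2⟩
    refine ⟨hab.trans hbc, fun x hx => ?_⟩
    have hx' : x ∈ W ∪ Us b.1.1 := by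
      rcases hx with h | h
      · exact Or.inl h
      · exact Or.inr (biUnion_subset_biUnion_left hab h)
    rw [hbc2 hx', hab2 hx]
  -- chains are bounded
  have hchain : ∀ c : Set T, IsChain r c → ∃ ub, ∀ a ∈ c, r a ub := by
    intro c hc
    rcases c.eq_empty_or_nonempty with rfl | hcne
    · exact ⟨base, by simp⟩
    obtain ⟨p0, hp0⟩ := hcne
    set s' : Set ι := ⋃ p ∈ c, p.1.1 with hs'_def
    have hdomsub : ∀ p ∈ c, W ∪ Us p.1.1 ⊆ W ∪ Us s' := by
      intro p hp x hx
      rcases hx with h | h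
      · exact Or.inl h
      · exact Or.inr (biUnion_subset_biUnion_left (subset_biUnion_of_mem (u := fun p : T => p.1.1) hp) h)
    set g' : X → ℝ := fun x =>
      if h : ∃ p ∈ c, x ∈ W ∪ Us p.1.1 then (h.choose).1.2 x else F x with hg'_def
    -- compatibility
    have hrefl : ∀ p : T, r p p := fun p => ⟨subset_rfl, fun x _ => rfl⟩
    have hcompat : ∀ p ∈ c, EqOn g' p.1.2 (W ∪ Us p.1.1) := by
      intro p hp x hx
      have hex : ∃ q ∈ c, x ∈ W ∪ Us q.1.1 := ⟨p, hp, hx⟩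
      rw [hg'_def]
      simp only [dif_pos hex]
      obtain ⟨hqc, hqx⟩ := hex.choose_spec
      have htot : r p hex.choose ∨ r hex.choose p := by
        rcases eq_or_ne p hex.choose with h | h
        · exact Or.inl (h ▸ hrefl p)
        · exact hc hp hqc h
      rcases htot with hpq | hqp
      · exact hpq.2 hx
      · exact (hqp.2 hqx).symm
    have hdomall : ∀ x ∈ W ∪ Us s', ∃ p ∈ c, x ∈ W ∪ Us p.1.1 := by
      intro x hx
      rcases hx with h | h
      · exact ⟨p0, hp0, Or.inl h⟩
      · obtain ⟨i, hi, hxi⟩ := mem_iUnion₂.1 h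
        obtain ⟨p, hp, hip⟩ := mem_iUnion₂.1 hi
        exact ⟨p, hp, Or.inr (mem_iUnion₂.2 ⟨i, hip, hxi⟩)⟩
    have hls' : IsLowerSet s' := by
      intro a b hba ha
      obtain ⟨p, hp, hap⟩ := mem_iUnion₂.1 ha
      exact mem_iUnion₂.2 ⟨p, hp, p.2.1 hba hap⟩
    have hcont' : ContinuousOn g' (W ∪ Us s') := by
      intro x hx
      obtain ⟨p, hp, hxp⟩ := hdomall x hx
      have hopen : IsOpen (W ∪ Us p.1.1) := hWo.union (hUsOpen _)
      have hca : ContinuousAt p.1.2 x := (p.2.2.1.continuousAt (hopen.mem_nhds hxp))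
      have : ContinuousAt g' x := by
        refine hca.congr ?_
        filter_upwards [hopen.mem_nhds hxp] with y hy using (hcompat p hp hy).symm
      exact this.continuousWithinAt
    have hmaps' : MapsTo g' (W ∪ Us s') (Icc (0:ℝ) 1) := by
      intro x hx
      obtain ⟨p, hp, hxp⟩ := hdomall x hx
      rw [hcompat p hp hxp]
      exact p.2.2.2.1 hxp
    have heq' : EqOn g' F W := by
      intro x hx
      rw [hcompat p0 hp0 (Or.inl hx)]
      exact p0.2.2.2.2 hx
    refine ⟨⟨(s', g'), hls', hcont', hmaps', heq'⟩, ?_⟩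
    intro p hp
    exact ⟨subset_biUnion_of_mem (u := fun p : T => p.1.1) hp, hcompat p hp⟩
  -- apply Zorn
  obtain ⟨m, hmax⟩ := exists_maximal_of_chains_bounded hchain hrtrans
  -- the maximal element has full domain
  have hfull : m.1.1 = Set.univ := by
    by_contra hne
    have hex : ∃ i : ι, i ∉ m.1.1 := by
      by_contra h
      push_neg at h
      exact hne (eq_univ_of_forall h)
    obtain ⟨i0, hi0, hmin⟩ := wellFounded_lt.has_min {i | i ∉ m.1.1} hex
    have hseg : m.1.1 = Iio i0 := by
      apply Set.eq_of_subset_of_subset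
      · intro j hj
        by_contra hji
        simp only [mem_Iio, not_lt] at hji
        exact hi0 (m.2.1 hji hj)
      · intro j hj
        by_contra hjm
        exact hmin j hjm hj
    have hscnt : m.1.1.Countable := hseg ▸ hcnt i0
    have hUscoz : IsCozero (Us m.1.1) := IsCozero.biUnion_countable hscnt (fun i _ => hC i)
    have hWCcoz : IsCozero (W ∩ C i0) :=
      hWcoz (C i0) (hC i0) (subset_iUnion C i0)
    set Z : Set X := Us m.1.1 ∪ (W ∩ C i0) with hZ_def
    have hZcoz : IsCozero Z := hUscoz.union hWCcoz
    have hZsub : Z ⊆ W ∪ Us m.1.1 := by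
      rintro x (h | h)
      · exact Or.inr h
      · exact Or.inl h.1
    -- extend g over Z using the F-space property
    have hgZ : Continuous (Z.restrict m.1.2) :=
      continuousOn_iff_continuous_restrict.1 (m.2.2.1.mono hZsub)
    have hgZI : ∀ z : Z, m.1.2 z ∈ Icc (0:ℝ) 1 := fun z => m.2.2.2.1 (hZsub z.2)
    obtain ⟨H, hH⟩ := hX Z hZcoz ⟨fun z => ⟨m.1.2 z, hgZI z⟩, hgZ.subtype_mk _⟩
    have hHval : ∀ z : Z, (H (z : X) : ℝ) = m.1.2 z := fun z => congrArg Subtype.val (hH z)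
    set g' : X → ℝ := fun x => if x ∈ C i0 then (H x : ℝ) else m.1.2 x with hg'_def
    have hagree : EqOn g' m.1.2 (W ∪ Us m.1.1) := by
      intro x hx
      rw [hg'_def]
      by_cases h : x ∈ C i0
      · simp only [if_pos h]
        have hxZ : x ∈ Z := by
          rcases hx with hw | hu
          · exact Or.inr ⟨hw, h⟩
          · exact Or.inl hu
        exact hHval ⟨x, hxZ⟩
      · simp [if_neg h]
    set s' : Set ι := insert i0 m.1.1 with hs'_def
    have hls' : IsLowerSet s' := by
      intro a b hba ha
      rcases ha with rfl | ha
      · rcases lt_or_eq_of_le hba with h | h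
        · right; rw [hseg]; exact h
        · left; exact h
      · right; exact m.2.1 hba ha
    have hUss' : Us s' = C i0 ∪ Us m.1.1 := by
      show (⋃ i ∈ insert i0 (m.1.1 : Set ι), C i) = _
      rw [biUnion_insert]
    have hdom' : W ∪ Us s' = (W ∪ Us m.1.1) ∪ C i0 := by
      rw [hUss']
      ext x
      simp only [mem_union]
      tauto
    have hcont' : ContinuousOn g' (W ∪ Us s') := by
      rw [hdom']
      intro x hx
      rcases hx with h | h
      · have hopen : IsOpen (W ∪ Us m.1.1) := hWo.union (hUsOpen _)
        have hca : ContinuousAt m.1.2 x := m.2.2.1.continuousAt (hopen.mem_nhds h)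
        refine (hca.congr ?_).continuousWithinAt
        filter_upwards [hopen.mem_nhds h] with y hy using (hagree hy).symm
      · have hopen : IsOpen (C i0) := (hC i0).isOpen
        have hca : ContinuousAt (fun x => (H x : ℝ)) x :=
          (continuous_subtype_val.comp H.continuous).continuousAt
        refine (hca.congr ?_).continuousWithinAt
        filter_upwards [hopen.mem_nhds h] with y hy
        rw [hg'_def]; simp [if_pos hy]
    have hmaps' : MapsTo g' (W ∪ Us s') (Icc (0:ℝ) 1) := by
      rw [hdom']
      intro x hx
      rw [hg'_def]
      by_cases h : x ∈ C i0
      · simp only [if_pos h]; exact (H x).2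
      · simp only [if_neg h]
        rcases hx with hx | hx
        · exact m.2.2.2.1 hx
        · exact absurd hx h
    have heqF' : EqOn g' F W := fun x hx => by
      rw [hagree (Or.inl hx)]; exact m.2.2.2.2 hx
    set q : T := ⟨(s', g'), hls', hcont', hmaps', heqF'⟩ with hq_def
    have hmq : r m q := ⟨subset_insert _ _, hagree⟩
    have hqm := hmax q hmq
    exact hi0 (hqm.1 (mem_insert _ _))
  -- conclude
  refine ⟨m.1.2, ?_, ?_, m.2.2.2.2⟩
  · have : (⋃ i, C i) ⊆ W ∪ Us m.1.1 := by
      rw [hfull]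
      intro x hx
      exact Or.inr (by simpa [hUs_def] using hx)
    exact m.2.2.1.mono this
  · have : (⋃ i, C i) ⊆ W ∪ Us m.1.1 := by
      rw [hfull]
      intro x hx
      exact Or.inr (by simpa [hUs_def] using hx)
    exact m.2.2.2.1.mono_left this


end AuxLemmas

theorem union_of_aleph_one_cozero_sets_is_FSpace
    {X : Type*} [TopologicalSpace X] [T35Space X] (hX : IsFSpace X)
    (𝓒 : Set (Set X)) (hcoz : ∀ C ∈ 𝓒, IsCozero C)
    (hcard : #𝓒 ≤ Cardinal.aleph 1) (U : Set X) (hU : U = ⋃₀ 𝓒) :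
    IsFSpace U := by
  classical
  -- set up the index family
  set 𝓒' : Set (Set X) := insert ∅ 𝓒 with h𝓒'_def
  have hcoz' : ∀ C ∈ 𝓒', IsCozero C := by
    rintro C (rfl | hC)
    · exact isCozero_empty
    · exact hcoz C hC
  have hcard' : #𝓒' ≤ Cardinal.aleph 1 := by
    calc #𝓒' ≤ #𝓒 + 1 := mk_insert_le
      _ ≤ Cardinal.aleph 1 + 1 := by gcongr
      _ = Cardinal.aleph 1 := add_one_eq (aleph0_le_aleph 1)
  set ι := (Cardinal.aleph 1).ord.ToType with hι_def
  have hmkι : #ι = Cardinal.aleph 1 := by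
    rw [hι_def, mk_toType, card_ord]
  have hcnt : ∀ i : ι, (Set.Iio i).Countable := by
    intro i
    rw [Cardinal.countable_iff_lt_aleph_one]
    exact mk_Iio_ord_toType i
  have hemb : Nonempty (𝓒' ↪ ι) := by
    rw [← Cardinal.le_def, hmkι]; exact hcard'
  obtain ⟨e⟩ := hemb
  have hne : Nonempty 𝓒' := ⟨⟨∅, mem_insert _ _⟩⟩
  set Cfam : ι → Set X := fun i => ((Function.invFun e i : 𝓒') : Set X) with hCfam_def
  have hCcoz : ∀ i, IsCozero (Cfam i) := fun i => hcoz' _ (Function.invFun e i).2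
  have hUeq : U = ⋃ i, Cfam i := by
    rw [hU]
    apply Set.eq_of_subset_of_subset
    · intro x hx
      obtain ⟨D, hD, hxD⟩ := hx
      refine mem_iUnion.2 ⟨e ⟨D, Or.inr hD⟩, ?_⟩
      rw [hCfam_def]
      simp only
      rw [Function.leftInverse_invFun e.injective ⟨D, Or.inr hD⟩]
      exact hxD
    · intro x hx
      obtain ⟨i, hxi⟩ := mem_iUnion.1 hx
      rcases (Function.invFun e i).2 with h | h
      · rw [hCfam_def] at hxi; simp only at hxi
        rw [h] at hxi
        exact absurd hxi (notMem_empty x)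
      · exact ⟨_, h, hxi⟩
  have hUopen : IsOpen U := by
    rw [hUeq]
    exact isOpen_iUnion fun i => (hCcoz i).isOpen
  -- now prove the F-space property of U
  intro A hA f
  obtain ⟨φ, hφ⟩ := hA
  have hAopen : IsOpen A := by
    rw [hφ]; exact isOpen_ne.preimage φ.continuous
  set W : Set X := ((↑) : U → X) '' A with hW_def
  have hWo : IsOpen W := hUopen.isOpenMap_subtype_val A hAopen
  have hWU : W ⊆ U := by rintro x ⟨a, _, rfl⟩; exact a.2
  have hmemW : ∀ x : X, x ∈ W ↔ ∃ hu : x ∈ U, (⟨x, hu⟩ : U) ∈ A := by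
    intro x
    constructor
    · rintro ⟨a, ha, rfl⟩; exact ⟨a.2, ha⟩
    · rintro ⟨hu, ha⟩; exact ⟨⟨x, hu⟩, ha, rfl⟩
  have hWcoz : ∀ V : Set X, IsCozero V → V ⊆ ⋃ i, Cfam i → IsCozero (W ∩ V) := by
    intro V hV hVU
    have hVU' : V ⊆ U := hUeq ▸ hVU
    set ψ : C(V, ℝ) := ⟨fun v => φ (Set.inclusion hVU' v),
      φ.continuous.comp (continuous_inclusion hVU')⟩ with hψ_def
    have := isCozero_image_val hV ψ
    have heq : ((↑) : V → X) '' {x : V | ψ x ≠ 0} = W ∩ V := by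
      ext x
      simp only [mem_image, mem_setOf_eq, mem_inter_iff]
      constructor
      · rintro ⟨v, hv, rfl⟩
        refine ⟨(hmemW _).2 ⟨hVU' v.2, ?_⟩, v.2⟩
        rw [hφ]
        exact hv
      · rintro ⟨hxW, hxV⟩
        obtain ⟨hu, ha⟩ := (hmemW x).1 hxW
        refine ⟨⟨x, hxV⟩, ?_, rfl⟩
        rw [hφ] at ha
        exact ha
    rw [heq] at this
    exact this
  -- the function to extend, as a map on X
  set F : X → ℝ := fun x =>
    if h : ∃ hu : x ∈ U, (⟨x, hu⟩ : U) ∈ A then (f ⟨⟨x, h.choose⟩, h.choose_spec⟩ : ℝ)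
    else 0 with hF_def
  have hFW : ∀ (x : X) (hu : x ∈ U) (ha : (⟨x, hu⟩ : U) ∈ A),
      F x = (f ⟨⟨x, hu⟩, ha⟩ : ℝ) := by
    intro x hu ha
    have hex : ∃ hu : x ∈ U, (⟨x, hu⟩ : U) ∈ A := ⟨hu, ha⟩
    rw [hF_def]
    simp only [dif_pos hex]
  have hF : ContinuousOn F W := by
    rw [continuousOn_iff_continuous_restrict]
    set m : W → A := fun w => ⟨⟨(w : X), hWU w.2⟩, by
      obtain ⟨a, ha, hav⟩ := w.2
      have : (⟨(w : X), hWU w.2⟩ : U) = a := Subtype.ext hav.symm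
      rw [this]; exact ha⟩ with hm_def
    have hmc : Continuous m :=
      Continuous.subtype_mk (Continuous.subtype_mk continuous_subtype_val _) _
    have : W.domRestrict F = fun w => (f (m w) : ℝ) := by
      funext w
      simp only [restrict_apply, hm_def]
      exact hFW _ _ _
    rw [this]
    exact continuous_subtype_val.comp (f.continuous.comp hmc)
  have hFI : MapsTo F W (Icc (0:ℝ) 1) := by
    intro x hx
    obtain ⟨hu, ha⟩ := (hmemW x).1 hx
    rw [hFW x hu ha]
    exact (f ⟨⟨x, hu⟩, ha⟩).2
  obtain ⟨G, hGc, hGI, hGF⟩ := key_extension hX hcnt Cfam hCcoz W hWo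
    (hUeq ▸ hWU) hWcoz F hF hFI
  have hGc' : ContinuousOn G U := hUeq ▸ hGc
  have hGI' : MapsTo G U (Icc (0:ℝ) 1) := hUeq ▸ hGI
  refine ⟨⟨fun u => ⟨G u, hGI' u.2⟩,
    Continuous.subtype_mk (continuousOn_iff_continuous_restrict.1 hGc') _⟩, ?_⟩
  intro a
  apply Subtype.ext
  show G ((a : U) : X) = (f a : ℝ)
  have haW : ((a : U) : X) ∈ W := ⟨a, a.2, rfl⟩
  rw [hGF haW, hFW _ (a : U).2 (by simpa using a.2)]
end
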